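/- arXiv:1902.00862 — 3 statements merged into one kernel-verified Lean document; each statement's English description precedes it below -/
import Mathlib

section
/- Conversely, if y* minimizes Σ_i f_i and each f_i is differentiable and convex, then there exists λ* ∈ ℝ^N such that (r*, λ*) with r* = y*·1_N satisfies -∇F(r*) - Lλ* = 0 and Lr* = 0. -/
/-! Fermat's rule at the minimizer `y*` makes the gradients `∇f_i(y*)` sum to zero, so `-∇F(r*)`
lies in the range of `L`, which supplies `λ*`; and `r*` is a multiple of `1`, which `L`
annihilates. -/

open Matrix

theorem sum_deriv_eq_zero_of_isMinOn {ι : Type*} (s : Finset ι) {f : ι → ℝ → ℝ} {y : ℝ}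
    (hdiff : ∀ i ∈ s, DifferentiableAt ℝ (f i) y)
    (hmin : IsMinOn (fun z => ∑ i ∈ s, f i z) Set.univ y) :
    ∑ i ∈ s, deriv (f i) y = 0 :=
  (hmin.isLocalMin Filter.univ_mem).hasDerivAt_eq_zero
    (HasDerivAt.fun_sum fun i hi => (hdiff i hi).hasDerivAt)

theorem Matrix.mulVec_const_eq_zero {m n R : Type*} [Fintype n] [CommSemiring R]
    {A : Matrix m n R} (hA : A *ᵥ (fun _ => 1) = 0) (c : R) :
    A *ᵥ (fun _ => c) = 0 := by
  have hconst : (fun _ : n => c) = c • fun _ => 1 := funext fun _ => (mul_one c).symm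
  rw [hconst, mulVec_smul, hA, smul_zero]

theorem optimal_is_equilibrium_general
    (N : ℕ) (f : Fin N → ℝ → ℝ)
    (hdiff : ∀ i, Differentiable ℝ (f i))
    (ystar : ℝ) (hmin : ∀ y : ℝ, (∑ i, f i ystar) ≤ ∑ i, f i y)
    (L : Matrix (Fin N) (Fin N) ℝ)
    (hLones : L.mulVec (fun _ => (1 : ℝ)) = 0)
    (hLrange : ∀ v : Fin N → ℝ, (∑ i, v i) = 0 → ∃ w : Fin N → ℝ, L.mulVec w = v) :
    ∃ lstar : Fin N → ℝ,
      (∀ i, -(deriv (f i) ystar) - L.mulVec lstar i = 0) ∧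
      L.mulVec (fun _ => ystar) = 0 := by
  have hstationary : ∑ i, deriv (f i) ystar = 0 :=
    sum_deriv_eq_zero_of_isMinOn _ (fun i _ => (hdiff i).differentiableAt)
      fun y _ => hmin y
  obtain ⟨lstar, hlstar⟩ := hLrange (fun i => -deriv (f i) ystar) (by
    rw [Finset.sum_neg_distrib, hstationary, neg_zero])
  refine ⟨lstar, fun i => ?_, mulVec_const_eq_zero hLones ystar⟩
  rw [hlstar, sub_self]

/-- Conversely, if `y*` minimizes `∑ i, f i` with each `f i` differentiable and convex, and
`L` is the Laplacian of a connected graph (so `L 1 = 0` and the range of `L` is the orthogonal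
complement of `1`), then there exists `λ*` such that `(r*, λ*)` with `r* = y* • 1` satisfies
`-∇F(r*) - Lλ* = 0` and `Lr* = 0`. -/
theorem optimal_is_equilibrium
    (N : ℕ) (f : Fin N → ℝ → ℝ)
    (hdiff : ∀ i, Differentiable ℝ (f i))
    (hconv : ∀ i, ConvexOn ℝ Set.univ (f i))
    (ystar : ℝ) (hmin : ∀ y : ℝ, (∑ i, f i ystar) ≤ ∑ i, f i y)
    (L : Matrix (Fin N) (Fin N) ℝ)
    (hLones : L.mulVec (fun _ => (1 : ℝ)) = 0)
    (hLrange : ∀ v : Fin N → ℝ, (∑ i, v i) = 0 → ∃ w : Fin N → ℝ, L.mulVec w = v) :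
    ∃ lstar : Fin N → ℝ,
      (∀ i, -(deriv (f i) ystar) - L.mulVec lstar i = 0) ∧
      L.mulVec (fun _ => ystar) = 0 :=
  optimal_is_equilibrium_general N f hdiff ystar hmin L hLones hLrange
end

section
/- Suppose θ̄ : [0,∞) → ℝ^n and p : [0,∞) → ℝ^n satisfy: θ̄'(t) → 0, θ̄(t)ᵀp(t) → 0 as t → ∞, p is bounded and uniformly continuous, θ̄ is bounded, and p is persistently exciting, i.e. there exist m, T₀, t₀ > 0 with (1/T₀)∫_t^{t+T₀} p(τ)p(τ)ᵀ dτ ⪰ m·I_n for all t ≥ t₀. Then θ̄(t) → 0 as t → ∞. -/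
open Filter

/-- Parameter convergence under persistence of excitation: if `θ̄' → 0`, `θ̄ᵀp → 0`,
`p` is bounded and uniformly continuous, `θ̄` is bounded, and `p` is persistently
exciting, then `θ̄(t) → 0` as `t → ∞`. -/
theorem pe_parameter_convergence
    (n : ℕ) (θ p θd : ℝ → Fin n → ℝ)
    (hderiv : ∀ t, HasDerivAt θ (θd t) t)
    (hθd : Tendsto θd atTop (nhds 0))
    (hlin : Tendsto (fun t => ∑ i, θ t i * p t i) atTop (nhds 0))
    (hpbdd : ∃ C : ℝ, ∀ t, ‖p t‖ ≤ C)
    (hpUC : UniformContinuous p)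
    (hθbdd : ∃ C : ℝ, ∀ t, ‖θ t‖ ≤ C)
    (m T₀ t₀ : ℝ) (hm : 0 < m) (hT₀ : 0 < T₀) (ht₀ : 0 < t₀)
    (hPE : ∀ t ≥ t₀, ∀ x : Fin n → ℝ,
      m * (∑ i, (x i) ^ 2) ≤ (1 / T₀) * ∫ τ in t..(t + T₀), (∑ i, p τ i * x i) ^ 2) :
    Tendsto θ atTop (nhds 0) := by
  obtain ⟨C₀, hC₀⟩ := hpbdd
  set C : ℝ := max C₀ 0 with hCdef
  have hCnn : (0:ℝ) ≤ C := le_max_right _ _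
  have hpC : ∀ t, ‖p t‖ ≤ C := fun t => (hC₀ t).trans (le_max_left _ _)
  have hpcont : Continuous p := hpUC.continuous
  set K : ℝ := 1 + (n : ℝ) * C * T₀ with hKdef
  have hKpos : (0:ℝ) < K := by positivity
  rw [Metric.tendsto_atTop]
  intro ε hε
  set δ : ℝ := Real.sqrt m * ε / (2 * K) with hδdef
  have hδpos : 0 < δ :=
    div_pos (mul_pos (Real.sqrt_pos.2 hm) hε) (by positivity)
  obtain ⟨N₁, hN₁⟩ := (Metric.tendsto_atTop.mp hθd) δ hδpos
  obtain ⟨N₂, hN₂⟩ := (Metric.tendsto_atTop.mp hlin) δ hδpos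
  refine ⟨max t₀ (max N₁ N₂), fun t ht => ?_⟩
  have htt₀ : t₀ ≤ t := le_trans (le_max_left _ _) ht
  have htN₁ : N₁ ≤ t := le_trans ((le_max_left _ _).trans (le_max_right _ _)) ht
  have htN₂ : N₂ ≤ t := le_trans ((le_max_right _ _).trans (le_max_right _ _)) ht
  set B : ℝ := δ * K with hBdef
  have hBnn : 0 ≤ B := le_of_lt (mul_pos hδpos hKpos)
  -- pointwise bound on the integrand
  have hpoint : ∀ τ ∈ Set.Icc t (t + T₀), |∑ i, p τ i * θ t i| ≤ B := by
    intro τ hτ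
    have hτt : t ≤ τ := hτ.1
    have hτT : τ ≤ t + T₀ := hτ.2
    -- bound on θ t - θ τ via MVT
    have hmvt : ‖θ τ - θ t‖ ≤ δ * (τ - t) := by
      have hf : ∀ s ∈ Set.Icc t τ, HasDerivWithinAt θ (θd s) (Set.Icc t τ) s :=
        fun s _ => (hderiv s).hasDerivWithinAt
      have hbound : ∀ s ∈ Set.Ico t τ, ‖θd s‖ ≤ δ := by
        intro s hs
        have := hN₁ s (le_trans htN₁ hs.1)
        rw [dist_zero_right] at this
        exact this.le
      exact norm_image_sub_le_of_norm_deriv_le_segment' hf hbound τ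
        ⟨hτt, le_refl _⟩
    have hdiff : ∀ i, |θ t i - θ τ i| ≤ δ * T₀ := by
      intro i
      have h1 : |θ t i - θ τ i| = ‖(θ τ - θ t) i‖ := by
        simp [Pi.sub_apply, abs_sub_comm]
      have h2 : ‖(θ τ - θ t) i‖ ≤ ‖θ τ - θ t‖ := norm_le_pi_norm _ i
      have h3 : δ * (τ - t) ≤ δ * T₀ := by
        apply mul_le_mul_of_nonneg_left _ hδpos.le
        linarith
      rw [h1]; exact h2.trans (hmvt.trans h3)
    have hsplit : (∑ i, p τ i * θ t i)
        = (∑ i, θ τ i * p τ i) + ∑ i, p τ i * (θ t i - θ τ i) := by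
      rw [← Finset.sum_add_distrib]
      congr 1; ext i; ring
    have h1 : |∑ i, θ τ i * p τ i| ≤ δ := by
      have := hN₂ τ (le_trans htN₂ hτt)
      rw [dist_zero_right] at this
      simpa using this.le
    have h2 : |∑ i, p τ i * (θ t i - θ τ i)| ≤ (n : ℝ) * C * (δ * T₀) := by
      calc |∑ i, p τ i * (θ t i - θ τ i)|
          ≤ ∑ i, |p τ i * (θ t i - θ τ i)| := Finset.abs_sum_le_sum_abs _ _
        _ ≤ ∑ _i : Fin n, C * (δ * T₀) := by
            apply Finset.sum_le_sum
            intro i _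
            rw [abs_mul]
            apply mul_le_mul _ (hdiff i) (abs_nonneg _) hCnn
            exact (norm_le_pi_norm (p τ) i).trans (hpC τ)
        _ = (n : ℝ) * C * (δ * T₀) := by
            rw [Finset.sum_const, Finset.card_univ, Fintype.card_fin,
              nsmul_eq_mul]; ring
    calc |∑ i, p τ i * θ t i|
        ≤ |∑ i, θ τ i * p τ i| + |∑ i, p τ i * (θ t i - θ τ i)| := by
          rw [hsplit]; exact abs_add_le _ _
      _ ≤ δ + (n : ℝ) * C * (δ * T₀) := add_le_add h1 h2
      _ = B := by rw [hBdef, hKdef]; ring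
  -- integrability and integral bound
  have hint : IntervalIntegrable (fun τ => (∑ i, p τ i * θ t i) ^ 2)
      MeasureTheory.volume t (t + T₀) := by
    apply Continuous.intervalIntegrable
    apply Continuous.pow
    exact continuous_finset_sum _ fun i _ =>
      ((continuous_apply i).comp hpcont).mul continuous_const
  have hab : t ≤ t + T₀ := by linarith
  have hIbound : (∫ τ in t..(t + T₀), (∑ i, p τ i * θ t i) ^ 2) ≤ T₀ * B ^ 2 := by
    have := intervalIntegral.integral_mono_on hab hint
      (intervalIntegrable_const (c := B ^ 2)) (fun τ hτ => by
        have := hpoint τ hτ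
        have h := abs_le.mp this
        nlinarith [h.1, h.2])
    simpa using this
  have hPEt := hPE t htt₀ (θ t)
  have hsum : m * (∑ i, (θ t i) ^ 2) ≤ B ^ 2 := by
    calc m * (∑ i, (θ t i) ^ 2)
        ≤ (1 / T₀) * ∫ τ in t..(t + T₀), (∑ i, p τ i * θ t i) ^ 2 := hPEt
      _ ≤ (1 / T₀) * (T₀ * B ^ 2) := by
          apply mul_le_mul_of_nonneg_left hIbound
          positivity
      _ = B ^ 2 := by field_simp
  have hB2 : B ^ 2 = m * (ε / 2) ^ 2 := by
    have : B = Real.sqrt m * ε / 2 := by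
      rw [hBdef, hδdef]; field_simp
    rw [this]
    rw [div_pow, mul_pow, Real.sq_sqrt hm.le, div_pow]
    ring
  have hsum2 : (∑ i, (θ t i) ^ 2) ≤ (ε / 2) ^ 2 := by
    rw [hB2] at hsum
    exact le_of_mul_le_mul_left hsum hm
  have hnorm : ‖θ t‖ ≤ ε / 2 := by
    rw [pi_norm_le_iff_of_nonneg (by positivity)]
    intro i
    have h1 : (θ t i) ^ 2 ≤ (ε / 2) ^ 2 := by
      refine le_trans ?_ hsum2
      exact Finset.single_le_sum (fun j _ => sq_nonneg (θ t j)) (Finset.mem_univ i)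
    have h2 := Real.sqrt_le_sqrt h1
    rw [Real.sqrt_sq_eq_abs, Real.sqrt_sq (by positivity : (0:ℝ) ≤ ε / 2)] at h2
    exact h2
  rw [dist_zero_right]
  linarith
end

section
/- Suppose V : ℝ^n → ℝ is C¹ and x : [0,∞) → ℝ^n is a C¹ solution such that d/dt V(x(t)) ≤ -W(x(t)) for a continuous nonnegative function W, V is radially unbounded and bounded below, and W is uniformly continuous along the trajectory. Then x(t) is bounded on [0,∞) and W(x(t)) → 0 as t → ∞. -/
open Filter Set Topology

/-!
Along the trajectory `V ∘ x` is nonincreasing, so radial unboundedness traps `x` in a ball, and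
being bounded below, `V ∘ x` converges. Barbalat's argument then shows `W ∘ x → 0`: if
`W (x t) ≥ ε` at arbitrarily late times, uniform continuity keeps `W (x s) ≥ ε / 2` on a window
`[t, t + δ]` of fixed length, over which `V ∘ x` must drop by at least `ε δ / 2`, contradicting
its convergence.
-/

theorem AntitoneOn.exists_tendsto_atTop_of_bddBelow {α β : Type*} [LinearOrder α]
    [ConditionallyCompleteLinearOrder β] [TopologicalSpace β] [OrderTopology β]
    {f : α → β} {a : α} (hf : AntitoneOn f (Ici a)) (hbdd : BddBelow (f '' Ici a)) :
    ∃ L, Tendsto f atTop (𝓝 L) := by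
  set h : α → β := fun s => f (max s a)
  have h_anti : Antitone h := fun s u hsu =>
    hf (mem_Ici.2 (le_max_right s a)) (mem_Ici.2 (le_max_right u a)) (max_le_max hsu le_rfl)
  have h_bdd : BddBelow (range h) :=
    hbdd.mono <| range_subset_iff.2 fun s => mem_image_of_mem f (le_max_right s a)
  refine ⟨_, (tendsto_atTop_ciInf h_anti h_bdd).congr' ?_⟩
  filter_upwards [eventually_ge_atTop a] with s hs
  simp only [h, max_eq_left hs]

theorem tendsto_sub_comp_add_const_atTop {f : ℝ → ℝ} {L : ℝ} (hf : Tendsto f atTop (𝓝 L))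
    (δ : ℝ) : Tendsto (fun t => f t - f (t + δ)) atTop (𝓝 0) := by
  simpa using hf.sub (hf.comp (tendsto_atTop_add_const_right _ δ tendsto_id))

theorem tendsto_zero_of_deriv_le_neg {g w : ℝ → ℝ} {a L : ℝ} (hg : Differentiable ℝ g)
    (hgL : Tendsto g atTop (𝓝 L)) (hw : UniformContinuousOn w (Ici a)) (hw0 : ∀ t, 0 ≤ w t)
    (hdecay : ∀ t ≥ a, deriv g t ≤ -w t) : Tendsto w atTop (𝓝 0) := by
  refine tendsto_order.2 ⟨fun b hb => Eventually.of_forall fun t => hb.trans_le (hw0 t),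
    fun ε hε => ?_⟩
  obtain ⟨δ, hδ, hclose⟩ := Metric.uniformContinuousOn_iff.1 hw (ε / 2) (half_pos hε)
  have hsmall : ∀ᶠ t in atTop, g t - g (t + δ) < ε / 2 * δ :=
    (tendsto_sub_comp_add_const_atTop hgL δ).eventually (gt_mem_nhds (by positivity))
  filter_upwards [hsmall, eventually_ge_atTop a] with t ht hta
  by_contra! hwt
  have hslope : ∀ s ∈ interior (Icc t (t + δ)), deriv g s ≤ -(ε / 2) := by
    intro s hs
    rw [interior_Icc] at hs
    have hsa : a ≤ s := hta.trans hs.1.le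
    have hdist : dist s t < δ := by
      rw [Real.dist_eq, abs_of_pos (sub_pos.2 hs.1)]
      linarith [hs.2]
    have hws : ε / 2 < w s := by
      linarith [(abs_lt.1 (Real.dist_eq _ _ ▸ hclose s hsa t hta hdist)).1]
    linarith [hdecay s hsa]
  have hdrop := (convex_Icc t (t + δ)).image_sub_le_mul_sub_of_deriv_le
    hg.continuous.continuousOn hg.differentiableOn hslope t ⟨le_rfl, by linarith⟩
    (t + δ) ⟨by linarith, le_rfl⟩ (by linarith)
  linarith

theorem lasalle_yoshizawa_general
    (n : ℕ) (V : (Fin n → ℝ) → ℝ) (W : (Fin n → ℝ) → ℝ)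
    (hV : ContDiff ℝ 1 V)
    (hVbelow : ∃ c : ℝ, ∀ z, c ≤ V z)
    (hVradial : ∀ M : ℝ, ∃ R : ℝ, ∀ z : Fin n → ℝ, R ≤ ‖z‖ → M ≤ V z)
    (hWnonneg : ∀ z, 0 ≤ W z)
    (x : ℝ → Fin n → ℝ) (hx : ContDiff ℝ 1 x)
    (hdecay : ∀ t ≥ (0 : ℝ), deriv (fun s => V (x s)) t ≤ -W (x t))
    (hWUC : UniformContinuousOn (fun t => W (x t)) (Set.Ici 0)) :
    (∃ C : ℝ, ∀ t ≥ (0 : ℝ), ‖x t‖ ≤ C) ∧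
    Tendsto (fun t => W (x t)) atTop (nhds 0) := by
  have hg : Differentiable ℝ (fun s => V (x s)) := (hV.comp hx).differentiable one_ne_zero
  have hanti : AntitoneOn (fun s => V (x s)) (Ici 0) :=
    antitoneOn_of_deriv_nonpos (convex_Ici 0) hg.continuous.continuousOn hg.differentiableOn
      fun t ht => (hdecay t (interior_subset ht)).trans (neg_nonpos.2 (hWnonneg _))
  constructor
  · obtain ⟨R, hR⟩ := hVradial (V (x 0) + 1)
    refine ⟨R, fun t ht => le_of_not_ge fun hRt => ?_⟩
    linarith [hR (x t) hRt, hanti self_mem_Ici ht ht]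
  · obtain ⟨c, hc⟩ := hVbelow
    obtain ⟨L, hL⟩ :=
      hanti.exists_tendsto_atTop_of_bddBelow ⟨c, by rintro _ ⟨s, -, rfl⟩; exact hc _⟩
    exact tendsto_zero_of_deriv_le_neg hg hL hWUC (fun t => hWnonneg (x t)) hdecay

/-- LaSalle–Yoshizawa type theorem: if `V` is `C¹`, bounded below and radially unbounded,
`W` is continuous and nonnegative, `x` is a `C¹` trajectory with `d/dt V(x(t)) ≤ -W(x(t))`
for all `t ≥ 0`, and `W` is uniformly continuous along the trajectory, then `x` is bounded
on `[0, ∞)` and `W(x(t)) → 0` as `t → ∞`. -/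
theorem lasalle_yoshizawa
    (n : ℕ) (V : (Fin n → ℝ) → ℝ) (W : (Fin n → ℝ) → ℝ)
    (hV : ContDiff ℝ 1 V)
    (hVbelow : ∃ c : ℝ, ∀ z, c ≤ V z)
    (hVradial : ∀ M : ℝ, ∃ R : ℝ, ∀ z : Fin n → ℝ, R ≤ ‖z‖ → M ≤ V z)
    (hW : Continuous W) (hWnonneg : ∀ z, 0 ≤ W z)
    (x : ℝ → Fin n → ℝ) (hx : ContDiff ℝ 1 x)
    (hdecay : ∀ t ≥ (0 : ℝ), deriv (fun s => V (x s)) t ≤ -W (x t))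
    (hWUC : UniformContinuousOn (fun t => W (x t)) (Set.Ici 0)) :
    (∃ C : ℝ, ∀ t ≥ (0 : ℝ), ‖x t‖ ≤ C) ∧
    Tendsto (fun t => W (x t)) atTop (nhds 0) :=
  lasalle_yoshizawa_general n V W hV hVbelow hVradial hWnonneg x hx hdecay hWUC
end
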